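/- arXiv:2603.03720 — 2 statements merged into one kernel-verified Lean document; each statement's English description precedes it below -/
import Mathlib

section
/- Let n ≥ 1 be an integer, T > 0, and p_1, ..., p_n > 0. Then ∫_{D^n_T} ∏_{j=1}^n u_j^{p_j - 1} du_1 ⋯ du_n = T^{p_1 + ⋯ + p_n} · (∏_{j=1}^n Γ(p_j)) / Γ(p_1 + ⋯ + p_n + 1). -/
/-!
Induct on `n`, splitting off the first coordinate. By Fubini the slice of `D^{n+1}_T` over
`u₀ = x` is `D^n_{T-x}`, so the induction hypothesis reduces the integral to the Beta integral
`∫₀ᵀ x^(p₀-1) (T-x)^s dx = T^(p₀+s) Γ(p₀) Γ(s+1) / Γ(p₀+s+1)`, where `s` is the sum of the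
remaining exponents, and the factor `Γ(s+1)` cancels. Working with lower Lebesgue integrals
avoids any integrability bookkeeping in the induction.
-/

open MeasureTheory

/-- The open simplex `D^n_T = {u ∈ ℝⁿ : uⱼ > 0 for all j, u₁ + ⋯ + uₙ < T}`. -/
def simplexD (n : ℕ) (T : ℝ) : Set (Fin n → ℝ) :=
  {u | (∀ j, 0 < u j) ∧ ∑ j, u j < T}

open Set
open scoped ENNReal

theorem intervalIntegrable_rpow_mul_rpow_sub {a b T : ℝ} (ha : 0 < a) (hb : 0 < b)
    (hT : 0 < T) :
    IntervalIntegrable (fun x => x ^ (a - 1) * (T - x) ^ (b - 1)) volume 0 T := by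
  have left_half : ∀ {a b : ℝ}, 0 < a →
      IntervalIntegrable (fun x => x ^ (a - 1) * (T - x) ^ (b - 1)) volume 0 (T / 2) := by
    intro a b ha
    refine (intervalIntegral.intervalIntegrable_rpow' (by linarith)).mul_continuousOn
      (ContinuousOn.rpow_const (by fun_prop) fun x hx => Or.inl ?_)
    rw [uIcc_of_le (by linarith)] at hx
    linarith [hx.2]
  -- `x ↦ T - x` swaps the roles of `a` and `b` and maps `[0, T/2]` onto `[T/2, T]`.
  have right_half := (left_half (b := a) hb).comp_sub_left T
  rw [sub_zero, sub_half] at right_half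
  refine (left_half ha).trans ((right_half.congr fun x _ => ?_).symm)
  simp only [sub_sub_cancel, mul_comm]

theorem integral_Ioo_rpow_mul_rpow_sub {a b T : ℝ} (ha : 0 < a) (hb : 0 < b) (hT : 0 < T) :
    ∫ x in Ioo 0 T, x ^ (a - 1) * (T - x) ^ (b - 1) =
      T ^ (a + b - 1) * (Real.Gamma a * Real.Gamma b / Real.Gamma (a + b)) := by
  have hbeta : Complex.betaIntegral a b =
      ((Real.Gamma a * Real.Gamma b / Real.Gamma (a + b) : ℝ) : ℂ) := by
    rw [Complex.betaIntegral_eq_Gamma_mul_div _ _ (by simpa) (by simpa)]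
    push_cast
    rw [Complex.Gamma_ofReal, Complex.Gamma_ofReal, ← Complex.ofReal_add, Complex.Gamma_ofReal]
  have hcomplex : (∫ x in (0 : ℝ)..T, (x : ℂ) ^ ((a : ℂ) - 1) * ((T : ℂ) - x) ^ ((b : ℂ) - 1)) =
      ((∫ x in Ioo 0 T, x ^ (a - 1) * (T - x) ^ (b - 1) : ℝ) : ℂ) := by
    rw [← integral_Ioc_eq_integral_Ioo, ← intervalIntegral.integral_of_le hT.le,
      ← intervalIntegral.integral_ofReal]
    refine intervalIntegral.integral_congr fun x hx => ?_
    rw [uIcc_of_le hT.le] at hx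
    rw [Complex.ofReal_mul, Complex.ofReal_cpow hx.1,
      Complex.ofReal_cpow (sub_nonneg.2 hx.2)]
    push_cast
    ring
  have hscaled := Complex.betaIntegral_scaled a b hT
  rw [hcomplex, hbeta, show (a : ℂ) + b - 1 = ((a + b - 1 : ℝ) : ℂ) by push_cast; ring,
    ← Complex.ofReal_cpow hT.le, ← Complex.ofReal_mul] at hscaled
  exact_mod_cast hscaled

theorem lintegral_Ioo_rpow_mul_rpow_sub {a b T : ℝ} (ha : 0 < a) (hb : 0 < b) (hT : 0 < T) :
    ∫⁻ x in Ioo 0 T, ENNReal.ofReal (x ^ (a - 1) * (T - x) ^ (b - 1)) =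
      ENNReal.ofReal (T ^ (a + b - 1) * (Real.Gamma a * Real.Gamma b / Real.Gamma (a + b))) := by
  have hint : IntegrableOn (fun x => x ^ (a - 1) * (T - x) ^ (b - 1)) (Ioo 0 T) :=
    ((intervalIntegrable_iff_integrableOn_Ioc_of_le hT.le).1
      (intervalIntegrable_rpow_mul_rpow_sub ha hb hT)).mono_set Ioo_subset_Ioc_self
  have hnonneg : ∀ᵐ x ∂volume.restrict (Ioo 0 T), 0 ≤ x ^ (a - 1) * (T - x) ^ (b - 1) :=
    ae_restrict_of_forall_mem measurableSet_Ioo fun x hx =>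
      mul_nonneg (Real.rpow_nonneg hx.1.le _) (Real.rpow_nonneg (sub_nonneg.2 hx.2.le) _)
  rw [← ofReal_integral_eq_lintegral_ofReal hint hnonneg, integral_Ioo_rpow_mul_rpow_sub ha hb hT]

theorem setLIntegral_prod_eq_setLIntegral_fiber {α β : Type*} [MeasurableSpace α]
    [MeasurableSpace β] {μ : Measure α} {ν : Measure β} [SFinite ν] {A : Set α} {B : α → Set β}
    (hA : MeasurableSet A) (hE : MeasurableSet {z : α × β | z.1 ∈ A ∧ z.2 ∈ B z.1})
    {g : α × β → ℝ≥0∞} (hg : Measurable g) :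
    ∫⁻ z in {z : α × β | z.1 ∈ A ∧ z.2 ∈ B z.1}, g z ∂μ.prod ν =
      ∫⁻ x in A, ∫⁻ y in B x, g (x, y) ∂ν ∂μ := by
  rw [← lintegral_indicator hE, lintegral_prod _ (hg.indicator hE).aemeasurable,
    ← lintegral_indicator hA]
  congr 1
  funext x
  by_cases hx : x ∈ A
  · have hfiber : B x = Prod.mk x ⁻¹' {z : α × β | z.1 ∈ A ∧ z.2 ∈ B z.1} := by
      ext y; simp [hx]
    rw [indicator_of_mem hx, hfiber, ← lintegral_indicator (measurable_prodMk_left hE)]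
    rfl
  · simp [hx]

theorem measurableSet_simplexD (n : ℕ) (T : ℝ) : MeasurableSet (simplexD n T) := by
  simp only [simplexD, ofPred_and, ofPred_forall]
  exact (MeasurableSet.iInter fun j => measurableSet_lt measurable_const (measurable_pi_apply j))
    |>.inter (measurableSet_lt (by fun_prop) measurable_const)

theorem cons_mem_simplexD_succ_iff {n : ℕ} {T x : ℝ} {v : Fin n → ℝ} :
    (Fin.cons x v : Fin (n + 1) → ℝ) ∈ simplexD (n + 1) T ↔
      x ∈ Ioo 0 T ∧ v ∈ simplexD n (T - x) := by
  simp only [simplexD, mem_ofPred_eq, Fin.forall_fin_succ, Fin.sum_univ_succ, Fin.cons_zero,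
    Fin.cons_succ, mem_Ioo]
  constructor
  · rintro ⟨⟨hx, hv⟩, hsum⟩
    have : 0 ≤ ∑ j, v j := Finset.sum_nonneg fun j _ => (hv j).le
    exact ⟨⟨hx, by linarith⟩, hv, by linarith⟩
  · rintro ⟨⟨hx, -⟩, hv, hsum⟩
    exact ⟨⟨hx, hv⟩, by linarith⟩

theorem setLIntegral_simplexD_succ {n : ℕ} {T : ℝ} {F : (Fin (n + 1) → ℝ) → ℝ≥0∞}
    (hF : Measurable F) :
    ∫⁻ u in simplexD (n + 1) T, F u =
      ∫⁻ x in Ioo 0 T, ∫⁻ v in simplexD n (T - x), F (Fin.cons x v) := by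
  set e := MeasurableEquiv.piFinSuccAbove (fun _ : Fin (n + 1) => ℝ) 0
  have he : ∀ z, e.symm z = Fin.cons z.1 z.2 := fun z => by
    simp [e, MeasurableEquiv.piFinSuccAbove_symm_apply, Fin.insertNthEquiv]
  have hpre : e.symm ⁻¹' simplexD (n + 1) T =
      {z : ℝ × (Fin n → ℝ) | z.1 ∈ Ioo 0 T ∧ z.2 ∈ simplexD n (T - z.1)} := by
    ext z
    rw [mem_preimage, he, cons_mem_simplexD_succ_iff, mem_ofPred_eq]
  have hFe : Measurable fun z : ℝ × (Fin n → ℝ) => F (Fin.cons z.1 z.2) := by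
    simpa only [Function.comp_def, he] using hF.comp e.symm.measurable
  have hmeas : MeasurableSet {z : ℝ × (Fin n → ℝ) | z.1 ∈ Ioo 0 T ∧ z.2 ∈ simplexD n (T - z.1)} :=
    hpre ▸ e.symm.measurable (measurableSet_simplexD _ _)
  have hmp : MeasurePreserving e.symm (volume.prod volume) volume :=
    (volume_preserving_piFinSuccAbove (fun _ => ℝ) 0).symm
  rw [← hmp.setLIntegral_comp_preimage_emb e.symm.measurableEmbedding, hpre]
  simp_rw [he]
  exact setLIntegral_prod_eq_setLIntegral_fiber (B := fun x => simplexD n (T - x))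
    measurableSet_Ioo hmeas hFe

theorem lintegral_simplexD_rpow (n : ℕ) {T : ℝ} (hT : 0 < T) {p : Fin n → ℝ}
    (hp : ∀ j, 0 < p j) :
    ∫⁻ u in simplexD n T, ENNReal.ofReal (∏ j, u j ^ (p j - 1)) =
      ENNReal.ofReal (T ^ (∑ j, p j) * (∏ j, Real.Gamma (p j)) /
        Real.Gamma ((∑ j, p j) + 1)) := by
  induction n generalizing T with
  | zero =>
    have : simplexD 0 T = univ := by simp [simplexD, hT]
    simp [this, volume_pi]
  | succ n ih =>
    set s := ∑ j : Fin n, p j.succ with hs_def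
    have hs : 0 ≤ s := Finset.sum_nonneg fun j _ => (hp _).le
    set C := (∏ j : Fin n, Real.Gamma (p j.succ)) / Real.Gamma (s + 1)
    have hC : 0 ≤ C := div_nonneg
      (Finset.prod_nonneg fun j _ => Real.Gamma_nonneg_of_nonneg (hp _).le)
      (Real.Gamma_nonneg_of_nonneg (by linarith))
    have hfiber : ∀ x ∈ Ioo 0 T, ∫⁻ v in simplexD n (T - x),
        ENNReal.ofReal (∏ j, (Fin.cons x v : Fin (n + 1) → ℝ) j ^ (p j - 1)) =
          ENNReal.ofReal (C * (x ^ (p 0 - 1) * (T - x) ^ (s + 1 - 1))) := by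
      intro x hx
      simp only [Fin.prod_univ_succ, Fin.cons_zero, Fin.cons_succ]
      simp_rw [ENNReal.ofReal_mul (Real.rpow_nonneg hx.1.le _)]
      rw [lintegral_const_mul' _ _ ENNReal.ofReal_ne_top,
        ih (sub_pos.2 hx.2) fun j => hp j.succ, ← ENNReal.ofReal_mul (Real.rpow_nonneg hx.1.le _)]
      congr 1
      rw [add_sub_cancel_right]
      ring
    rw [setLIntegral_simplexD_succ (by fun_prop), setLIntegral_congr_fun measurableSet_Ioo hfiber]
    simp_rw [ENNReal.ofReal_mul hC]
    rw [lintegral_const_mul' _ _ ENNReal.ofReal_ne_top,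
      lintegral_Ioo_rpow_mul_rpow_sub (hp 0) (by linarith) hT,
      ← ENNReal.ofReal_mul hC, Fin.sum_univ_succ, Fin.prod_univ_succ]
    congr 1
    have hG : Real.Gamma (s + 1) ≠ 0 := (Real.Gamma_pos_of_pos (by linarith)).ne'
    rw [← hs_def, show p 0 + (s + 1) - 1 = p 0 + s by ring, ← add_assoc]
    simp only [C]
    field_simp

theorem stmt_5_general (n : ℕ) (T : ℝ) (hT : 0 < T)
    (p : Fin n → ℝ) (hp : ∀ j, 0 < p j) :
    (∫ u in simplexD n T, ∏ j, u j ^ (p j - 1)) =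
      T ^ (∑ j, p j) * (∏ j, Real.Gamma (p j)) / Real.Gamma ((∑ j, p j) + 1) := by
  have hnonneg : ∀ᵐ u ∂volume.restrict (simplexD n T), 0 ≤ ∏ j, u j ^ (p j - 1) :=
    ae_restrict_of_forall_mem (measurableSet_simplexD n T) fun u hu =>
      Finset.prod_nonneg fun j _ => Real.rpow_nonneg (hu.1 j).le _
  have hmeas : Measurable fun u : Fin n → ℝ => ∏ j, u j ^ (p j - 1) := by fun_prop
  rw [integral_eq_lintegral_of_nonneg_ae hnonneg hmeas.aestronglyMeasurable,
    lintegral_simplexD_rpow n hT hp, ENNReal.toReal_ofReal]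
  have hsum : 0 ≤ ∑ j, p j := Finset.sum_nonneg fun j _ => (hp j).le
  exact div_nonneg (mul_nonneg (Real.rpow_nonneg hT.le _)
      (Finset.prod_nonneg fun j _ => Real.Gamma_nonneg_of_nonneg (hp j).le))
    (Real.Gamma_nonneg_of_nonneg (by linarith))

theorem stmt_5 (n : ℕ) (hn : 1 ≤ n) (T : ℝ) (hT : 0 < T)
    (p : Fin n → ℝ) (hp : ∀ j, 0 < p j) :
    (∫ u in simplexD n T, ∏ j, u j ^ (p j - 1)) =
      T ^ (∑ j, p j) * (∏ j, Real.Gamma (p j)) / Real.Gamma ((∑ j, p j) + 1) :=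
  stmt_5_general n T hT p hp
end

section
/- Let T > 0 and α₁, α₂ ∈ (0,2] with min{α₁,α₂} ≥ 1 and max{α₁,α₂} > 1, and let t ∈ [-3π/4, 3π/4]. Then |Φ(R e^{it})| → +∞ as R → 0+. -/
/-!
Write `z = R e^{it}` and `s = T|v|^{α₁} + T|v|^{α₂} ≥ 0`. Rotating by `e^{-it/2}` gives
`e^{-it/2} (z + s) = R e^{it/2} + s e^{-it/2}`, whose real part is `(R + s) cos (t/2)`. Hence
`|z + s| ≥ (R + s) cos (t/2)`, where `cos (t/2) > 0` because `|t| < π`; as `1 / (R + s)` is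
integrable when `max α > 1`, so is the integrand of `Φ`. Also
`Re (e^{it/2} / (z + s)) ≥ cos (t/2) / (R + s)`, so
`|Φ(z)| ≥ cos (t/2) ∫ dv / (R + s(v))`. Since `min α ≥ 1`, `s(v) ≤ 2Tv` on `(0, 1]`, and the last
integral is at least `log (1 + 2T/R) / (2T)`, which tends to `+∞` as `R → 0+`.
-/

open MeasureTheory Filter

/-- `Φ(z) = ∫_ℝ 1/(z + T|v|^{α₁} + T|v|^{α₂}) dv`. -/
noncomputable def Phi (T α₁ α₂ : ℝ) (z : ℂ) : ℂ :=
  ∫ v : ℝ, (z + ((T * |v| ^ α₁ + T * |v| ^ α₂ : ℝ) : ℂ))⁻¹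

open Set

namespace Complex

lemma re_exp_mul_I_mul_inv (θ : ℝ) (w : ℂ) :
    (exp (θ * I) * w⁻¹).re = (exp ((-θ : ℝ) * I) * w).re / normSq w := by
  simp only [mul_re, inv_re, inv_im, exp_ofReal_mul_I_re, exp_ofReal_mul_I_im, Real.cos_neg,
    Real.sin_neg]
  ring

lemma re_exp_neg_half_mul (R s t : ℝ) :
    (exp ((-(t / 2) : ℝ) * I) * (R * exp (t * I) + s)).re = (R + s) * Real.cos (t / 2) := by
  have h : exp ((-(t / 2) : ℝ) * I) * (R * exp (t * I) + s)
      = R * exp ((t / 2 : ℝ) * I) + s * exp ((-(t / 2) : ℝ) * I) := by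
    rw [mul_add, mul_left_comm, ← exp_add]
    push_cast
    ring_nf
  rw [h, add_re, re_ofReal_mul, re_ofReal_mul, exp_ofReal_mul_I_re, exp_ofReal_mul_I_re,
    Real.cos_neg]
  ring

lemma mul_cos_half_le_norm (R s t : ℝ) :
    (R + s) * Real.cos (t / 2) ≤ ‖(R * exp (t * I) + s : ℂ)‖ := by
  calc (R + s) * Real.cos (t / 2) = (exp ((-(t / 2) : ℝ) * I) * (R * exp (t * I) + s)).re :=
        (re_exp_neg_half_mul R s t).symm
    _ ≤ ‖exp ((-(t / 2) : ℝ) * I) * (R * exp (t * I) + s)‖ := re_le_norm _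
    _ = ‖(R * exp (t * I) + s : ℂ)‖ := by rw [norm_mul, norm_exp_ofReal_mul_I, one_mul]

lemma norm_mul_exp_add_le {R s : ℝ} (hR : 0 ≤ R) (hs : 0 ≤ s) (t : ℝ) :
    ‖(R * exp (t * I) + s : ℂ)‖ ≤ R + s := by
  refine (norm_add_le _ _).trans_eq ?_
  rw [norm_mul, norm_exp_ofReal_mul_I, mul_one, norm_real, norm_real, Real.norm_of_nonneg hR,
    Real.norm_of_nonneg hs]

lemma cos_half_div_le_re_exp_mul_inv {R s t : ℝ} (hR : 0 ≤ R) (hs : 0 ≤ s) (hRs : 0 < R + s)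
    (hc : 0 < Real.cos (t / 2)) :
    Real.cos (t / 2) / (R + s) ≤ (exp ((t / 2 : ℝ) * I) * (R * exp (t * I) + s)⁻¹).re := by
  have hlow := mul_cos_half_le_norm R s t
  have hup := norm_mul_exp_add_le hR hs t
  rw [re_exp_mul_I_mul_inv, re_exp_neg_half_mul, normSq_eq_norm_sq]
  calc Real.cos (t / 2) / (R + s) = (R + s) * Real.cos (t / 2) / (R + s) ^ 2 := by
        field_simp
    _ ≤ (R + s) * Real.cos (t / 2) / ‖(R * exp (t * I) + s : ℂ)‖ ^ 2 := by
        gcongr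
        exact pow_pos ((mul_pos hRs hc).trans_le hlow) 2

end Complex

open Complex in
theorem cos_half_mul_integral_le_norm_integral {α : Type*} [MeasurableSpace α] {μ : Measure α}
    {G : α → ℝ} (hGm : Measurable G) (hG : ∀ v, 0 ≤ G v) {R t : ℝ} (hR : 0 < R)
    (hc : 0 < Real.cos (t / 2)) (hint : Integrable (fun v => (R + G v)⁻¹) μ) :
    Real.cos (t / 2) * ∫ v, (R + G v)⁻¹ ∂μ ≤ ‖∫ v, ((R * exp (t * I) + G v : ℂ))⁻¹ ∂μ‖ := by
  set c := Real.cos (t / 2)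
  set u := exp ((t / 2 : ℝ) * I)
  have hRG : ∀ v, 0 < R + G v := fun v => add_pos_of_pos_of_nonneg hR (hG v)
  have hf : Integrable (fun v => ((R * exp (t * I) + G v : ℂ))⁻¹) μ := by
    refine (hint.const_mul c⁻¹).mono'
      (measurable_const.add (measurable_ofReal.comp hGm)).inv.aestronglyMeasurable
      (ae_of_all _ fun v => ?_)
    rw [norm_inv, ← mul_inv]
    exact inv_anti₀ (mul_pos hc (hRG v))
      ((mul_comm _ _).trans_le (mul_cos_half_le_norm R (G v) t))
  calc c * ∫ v, (R + G v)⁻¹ ∂μ = ∫ v, c / (R + G v) ∂μ := by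
        simp only [div_eq_mul_inv, integral_const_mul]
    _ ≤ ∫ v, (u * ((R * exp (t * I) + G v : ℂ))⁻¹).re ∂μ :=
        integral_mono (hint.const_mul c) (hf.const_mul u).re fun v =>
          cos_half_div_le_re_exp_mul_inv hR.le (hG v) (hRG v) hc
    _ = (u * ∫ v, ((R * exp (t * I) + G v : ℂ))⁻¹ ∂μ).re := by
        rw [← integral_const_mul]
        exact integral_re (hf.const_mul u)
    _ ≤ ‖u * ∫ v, ((R * exp (t * I) + G v : ℂ))⁻¹ ∂μ‖ := re_le_norm _
    _ = ‖∫ v, ((R * exp (t * I) + G v : ℂ))⁻¹ ∂μ‖ := by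
        rw [norm_mul, norm_exp_ofReal_mul_I, one_mul]

lemma one_add_rpow_le {β x : ℝ} (hβ : 0 ≤ β) (hx : 0 ≤ x) :
    (1 + x) ^ β ≤ 2 ^ β * (1 + x ^ β) := by
  have hxβ : 0 ≤ x ^ β := Real.rpow_nonneg hx β
  rcases le_total x 1 with h | h
  · calc (1 + x) ^ β ≤ 2 ^ β := Real.rpow_le_rpow (by positivity) (by linarith) hβ
      _ ≤ 2 ^ β * (1 + x ^ β) := le_mul_of_one_le_right (by positivity) (by linarith)
  · calc (1 + x) ^ β ≤ (2 * x) ^ β := Real.rpow_le_rpow (by positivity) (by linarith) hβ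
      _ = 2 ^ β * x ^ β := Real.mul_rpow zero_le_two hx
      _ ≤ 2 ^ β * (1 + x ^ β) := by gcongr; linarith

lemma integrable_inv_add_mul_abs_rpow {R T β : ℝ} (hR : 0 < R) (hT : 0 < T) (hβ : 1 < β) :
    Integrable (fun v : ℝ => (R + T * |v| ^ β)⁻¹) := by
  set m := min R T
  have hm : 0 < m := lt_min hR hT
  refine ((integrable_one_add_norm (E := ℝ) (μ := volume) (r := β) (by simpa using hβ)).const_mul
    (2 ^ β / m)).mono' (Measurable.aestronglyMeasurable (by fun_prop)) (ae_of_all _ fun v => ?_)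
  have hvβ : 0 ≤ |v| ^ β := Real.rpow_nonneg (abs_nonneg v) β
  have hsplit : m * (1 + |v| ^ β) ≤ R + T * |v| ^ β := by
    nlinarith [min_le_left R T, min_le_right R T]
  have hbracket := one_add_rpow_le (zero_le_one.trans hβ.le) (abs_nonneg v)
  rw [Real.norm_of_nonneg (inv_nonneg.2 (by positivity)), Real.norm_eq_abs,
    Real.rpow_neg (by positivity)]
  calc (R + T * |v| ^ β)⁻¹ ≤ (m * (1 + |v| ^ β))⁻¹ := inv_anti₀ (by positivity) hsplit
    _ ≤ (m / 2 ^ β * (1 + |v|) ^ β)⁻¹ := by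
        refine inv_anti₀ (by positivity) ?_
        rw [div_mul_eq_mul_div, div_le_iff₀ (by positivity), mul_assoc]
        gcongr
        linarith
    _ = 2 ^ β / m * ((1 + |v|) ^ β)⁻¹ := by rw [mul_inv, inv_div]

lemma integrable_inv_add_mul_abs_rpow_add {R T a b : ℝ} (hR : 0 < R) (hT : 0 < T)
    (hab : 1 < max a b) :
    Integrable (fun v : ℝ => (R + (T * |v| ^ a + T * |v| ^ b))⁻¹) := by
  refine (integrable_inv_add_mul_abs_rpow hR hT hab).mono'
    (Measurable.aestronglyMeasurable (by fun_prop)) (ae_of_all _ fun v => ?_)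
  have ha : 0 ≤ T * |v| ^ a := by positivity
  have hb : 0 ≤ T * |v| ^ b := by positivity
  have hmax : T * |v| ^ max a b ≤ T * |v| ^ a + T * |v| ^ b := by
    rcases max_cases a b with ⟨h, -⟩ | ⟨h, -⟩ <;> rw [h] <;> linarith
  rw [Real.norm_of_nonneg (by positivity)]
  exact inv_anti₀ (by positivity) (by linarith)

lemma integral_inv_add_mul {R c : ℝ} (hR : 0 < R) (hc : 0 < c) :
    ∫ v in (0 : ℝ)..1, (R + c * v)⁻¹ = Real.log (1 + c / R) / c := by
  rw [intervalIntegral.integral_comp_add_mul (fun x => x⁻¹) hc.ne', mul_zero, add_zero, mul_one,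
    integral_inv_of_pos hR (by positivity), smul_eq_mul, add_div, div_self hR.ne']
  ring

lemma log_one_add_div_le_integral_inv {G : ℝ → ℝ} {R c : ℝ} (hR : 0 < R) (hc : 0 < c)
    (hG : ∀ v, 0 ≤ G v) (hGle : ∀ v ∈ Ioc (0 : ℝ) 1, G v ≤ c * v)
    (hint : Integrable (fun v => (R + G v)⁻¹)) :
    Real.log (1 + c / R) / c ≤ ∫ v, (R + G v)⁻¹ := by
  have hcont : ContinuousOn (fun v : ℝ => (R + c * v)⁻¹) (Icc 0 1) :=
    ContinuousOn.inv₀ (by fun_prop) fun v hv => by nlinarith [hv.1]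
  calc Real.log (1 + c / R) / c = ∫ v in (0 : ℝ)..1, (R + c * v)⁻¹ :=
        (integral_inv_add_mul hR hc).symm
    _ = ∫ v in Ioc 0 1, (R + c * v)⁻¹ := intervalIntegral.integral_of_le zero_le_one
    _ ≤ ∫ v in Ioc 0 1, (R + G v)⁻¹ :=
        setIntegral_mono_on (hcont.integrableOn_Icc.mono_set Ioc_subset_Icc_self)
          hint.integrableOn measurableSet_Ioc fun v hv =>
            inv_anti₀ (add_pos_of_pos_of_nonneg hR (hG v)) (by linarith [hGle v hv])
    _ ≤ ∫ v, (R + G v)⁻¹ :=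
        setIntegral_le_integral hint (ae_of_all _ fun v => inv_nonneg.2 (by linarith [hG v]))

lemma tendsto_log_one_add_div_div {c : ℝ} (hc : 0 < c) :
    Tendsto (fun R => Real.log (1 + c / R) / c) (nhdsWithin 0 (Ioi 0)) atTop := by
  have h : Tendsto (fun R : ℝ => 1 + c / R) (nhdsWithin 0 (Ioi 0)) atTop := by
    simp only [div_eq_mul_inv]
    exact tendsto_atTop_add_const_left _ 1 (tendsto_inv_nhdsGT_zero.const_mul_atTop hc)
  exact (Real.tendsto_log_atTop.comp h).atTop_div_const hc

lemma mul_abs_rpow_add_mul_abs_rpow_le {T a b : ℝ} (hT : 0 ≤ T) (ha : 1 ≤ a) (hb : 1 ≤ b)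
    {v : ℝ} (hv : v ∈ Ioc (0 : ℝ) 1) :
    T * |v| ^ a + T * |v| ^ b ≤ 2 * T * v := by
  rw [abs_of_pos hv.1]
  have hva := Real.rpow_le_self_of_le_one hv.1.le hv.2 ha
  have hvb := Real.rpow_le_self_of_le_one hv.1.le hv.2 hb
  nlinarith

theorem stmt_14_general (T α₁ α₂ : ℝ) (hT : 0 < T)
    (hmin : 1 ≤ min α₁ α₂) (hmax : 1 < max α₁ α₂)
    (t : ℝ) (ht : t ∈ Set.Icc (-(3 * Real.pi / 4)) (3 * Real.pi / 4)) :
    Tendsto (fun R : ℝ => ‖Phi T α₁ α₂ (R * Complex.exp (t * Complex.I))‖)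
      (nhdsWithin 0 (Set.Ioi 0)) atTop := by
  have hc : 0 < Real.cos (t / 2) := Real.cos_pos_of_mem_Ioo
    ⟨by linarith [ht.1, Real.pi_pos], by linarith [ht.2, Real.pi_pos]⟩
  have hG : ∀ v : ℝ, 0 ≤ T * |v| ^ α₁ + T * |v| ^ α₂ := fun v => by positivity
  have hGle := fun v => mul_abs_rpow_add_mul_abs_rpow_le (v := v) hT.le
    (hmin.trans (min_le_left _ _)) (hmin.trans (min_le_right _ _))
  refine tendsto_atTop_mono' _ ?_
    ((tendsto_log_one_add_div_div (mul_pos two_pos hT)).const_mul_atTop hc)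
  filter_upwards [self_mem_nhdsWithin] with R (hR : 0 < R)
  have hint := integrable_inv_add_mul_abs_rpow_add hR hT hmax
  calc Real.cos (t / 2) * (Real.log (1 + 2 * T / R) / (2 * T))
      ≤ Real.cos (t / 2) * ∫ v, (R + (T * |v| ^ α₁ + T * |v| ^ α₂))⁻¹ := by
        gcongr
        exact log_one_add_div_le_integral_inv hR (by positivity) hG hGle hint
    _ ≤ ‖Phi T α₁ α₂ (R * Complex.exp (t * Complex.I))‖ :=
        cos_half_mul_integral_le_norm_integral (by fun_prop) hG hR hc hint

theorem stmt_14 (T α₁ α₂ : ℝ) (hT : 0 < T)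
    (h1 : α₁ ∈ Set.Ioc (0 : ℝ) 2) (h2 : α₂ ∈ Set.Ioc (0 : ℝ) 2)
    (hmin : 1 ≤ min α₁ α₂) (hmax : 1 < max α₁ α₂)
    (t : ℝ) (ht : t ∈ Set.Icc (-(3 * Real.pi / 4)) (3 * Real.pi / 4)) :
    Tendsto (fun R : ℝ => ‖Phi T α₁ α₂ (R * Complex.exp (t * Complex.I))‖)
      (nhdsWithin 0 (Set.Ioi 0)) atTop :=
  stmt_14_general T α₁ α₂ hT hmin hmax t ht
end
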